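/- arXiv:2404.03964 — 2 statements merged into one kernel-verified Lean document; each statement's English description precedes it below -/
import Mathlib

section
/- Let k be real, ψ = √(1 + k²), and let L be the 3×3 complex matrix with rows (0, −1, ik), (1, 0, 0), (ik, 0, 0). Then for every real τ, the matrix exponential e^{τL} equals the 3×3 matrix with rows (cos(ψτ), −(1/ψ)sin(ψτ), (ik/ψ)sin(ψτ)), ((1/ψ)sin(ψτ), (k² + cos(ψτ))/ψ², (ik/ψ²)(1 − cos(ψτ))), ((ik/ψ)sin(ψτ), (ik/ψ²)(cos(ψτ) − 1), (1 + k² cos(ψτ))/ψ²). -/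
/-!
Since `L³ = -ψ² L`, every odd power of `τL` is a scalar multiple of `L` and every even power of
positive degree a scalar multiple of `L²`. The exponential series therefore collapses to
`1 + (sin (ψτ) / ψ) L + ((1 - cos (ψτ)) / ψ²) L²`, the two scalars being the sine and cosine
series evaluated at `ψτ`; multiplying out gives the entries.
-/

open Matrix Complex
open scoped Nat

section PowThree

variable {S A : Type*} [CommSemiring S] [Semiring A] [Algebra S A] {a : A} {c : S}

theorem pow_two_mul_add_one_of_pow_three_eq_smul (h : a ^ 3 = c • a) (n : ℕ) :
    a ^ (2 * n + 1) = c ^ n • a := by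
  induction n with
  | zero => simp
  | succ n ih =>
    rw [show 2 * (n + 1) + 1 = 2 * n + 1 + 2 by ring, pow_add, ih, smul_mul_assoc,
      ← pow_succ' a 2, h, smul_smul, ← pow_succ]

theorem pow_two_mul_add_two_of_pow_three_eq_smul (h : a ^ 3 = c • a) (n : ℕ) :
    a ^ (2 * n + 2) = c ^ n • a ^ 2 := by
  rw [pow_succ, pow_two_mul_add_one_of_pow_three_eq_smul h, smul_mul_assoc, ← pow_two]

end PowThree

theorem Complex.hasSum_sin_mul_div {ψ : ℂ} (hψ : ψ ≠ 0) (τ : ℂ) :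
    HasSum (fun n : ℕ => ((2 * n + 1)! : ℂ)⁻¹ * (τ ^ (2 * n + 1) * (-ψ ^ 2) ^ n))
      (sin (ψ * τ) / ψ) := by
  refine ((hasSum_sin (ψ * τ)).div_const ψ).congr_fun fun n => ?_
  rw [neg_pow, ← pow_mul, mul_pow]
  field_simp
  ring

theorem Complex.hasSum_one_sub_cos_mul_div {ψ : ℂ} (hψ : ψ ≠ 0) (τ : ℂ) :
    HasSum (fun n : ℕ => ((2 * n + 2)! : ℂ)⁻¹ * (τ ^ (2 * n + 2) * (-ψ ^ 2) ^ n))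
      ((1 - cos (ψ * τ)) / ψ ^ 2) := by
  have hcos := ((hasSum_nat_add_iff' 1).2 (hasSum_cos (ψ * τ))).neg
  rw [Finset.sum_range_one, pow_zero, mul_zero, pow_zero, Nat.factorial_zero, Nat.cast_one,
    div_one, one_mul, neg_sub] at hcos
  refine (hcos.div_const (ψ ^ 2)).congr_fun fun n => ?_
  rw [neg_pow, ← pow_mul, mul_pow, show 2 * (n + 1) = 2 * n + 2 by ring]
  field_simp
  ring

theorem NormedSpace.exp_smul_eq_of_pow_three_eq_smul {A : Type*} [NormedRing A]
    [NormedAlgebra ℂ A] [CompleteSpace A] {a : A} {ψ : ℂ} (hψ : ψ ≠ 0)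
    (ha : a ^ 3 = (-ψ ^ 2) • a) (τ : ℂ) :
    exp (τ • a) = 1 + (sin (ψ * τ) / ψ) • a + ((1 - cos (ψ * τ)) / ψ ^ 2) • a ^ 2 := by
  have hodd : HasSum (fun n : ℕ => ((2 * n + 1)! : ℂ)⁻¹ • (τ • a) ^ (2 * n + 1))
      ((sin (ψ * τ) / ψ) • a) := by
    refine ((hasSum_sin_mul_div hψ τ).smul_const a).congr_fun fun n => ?_
    rw [smul_pow, pow_two_mul_add_one_of_pow_three_eq_smul ha, smul_smul, smul_smul, mul_assoc]
  have heven_succ : HasSum (fun n : ℕ => ((2 * (n + 1))! : ℂ)⁻¹ • (τ • a) ^ (2 * (n + 1)))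
      (((1 - cos (ψ * τ)) / ψ ^ 2) • a ^ 2) := by
    refine ((hasSum_one_sub_cos_mul_div hψ τ).smul_const (a ^ 2)).congr_fun fun n => ?_
    rw [smul_pow, mul_add, mul_one, pow_two_mul_add_two_of_pow_three_eq_smul ha, smul_smul,
      smul_smul, mul_assoc]
  have heven : HasSum (fun n : ℕ => ((2 * n)! : ℂ)⁻¹ • (τ • a) ^ (2 * n))
      (((1 - cos (ψ * τ)) / ψ ^ 2) • a ^ 2 + 1) := by
    simpa using (hasSum_nat_add_iff
      (f := fun n : ℕ => ((2 * n)! : ℂ)⁻¹ • (τ • a) ^ (2 * n)) 1).1 heven_succ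
  rw [(exp_series_hasSum_exp' (τ • a)).unique (heven.even_add_odd hodd)]
  abel

def rsweOperator (k : ℂ) : Matrix (Fin 3) (Fin 3) ℂ :=
  !![0, -1, I * k; 1, 0, 0; I * k, 0, 0]

theorem Complex.I_mul_mul_I_mul_self (z : ℂ) : I * z * (I * z) = -z ^ 2 := by
  linear_combination z ^ 2 * I_sq

theorem rsweOperator_sq (k : ℂ) :
    rsweOperator k ^ 2 = !![-(1 + k ^ 2), 0, 0; 0, -1, I * k; 0, -(I * k), -k ^ 2] := by
  rw [sq, rsweOperator, mul_fin_three]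
  ext i j
  fin_cases i <;> fin_cases j <;> simp [I_mul_mul_I_mul_self, add_comm]

theorem rsweOperator_pow_three (k : ℂ) :
    rsweOperator k ^ 3 = (-(1 + k ^ 2)) • rsweOperator k := by
  rw [pow_succ', rsweOperator_sq, rsweOperator, mul_fin_three]
  ext i j
  fin_cases i <;> fin_cases j <;> simp [I_mul_mul_I_mul_self] <;> ring

section

-- `NormedSpace.exp` only depends on the topology, so any matrix norm inducing it will do.
attribute [local instance] Matrix.linftyOpNormedRing Matrix.linftyOpNormedAlgebra

theorem exp_smul_rsweOperator {k ψ : ℂ} (hψ : ψ ≠ 0) (hψ_sq : ψ ^ 2 = 1 + k ^ 2) (τ : ℂ) :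
    NormedSpace.exp (τ • rsweOperator k) =
      !![cos (ψ * τ), -(1 / ψ) * sin (ψ * τ), (I * k / ψ) * sin (ψ * τ);
         (1 / ψ) * sin (ψ * τ), (k ^ 2 + cos (ψ * τ)) / ψ ^ 2, (I * k / ψ ^ 2) * (1 - cos (ψ * τ));
         (I * k / ψ) * sin (ψ * τ), (I * k / ψ ^ 2) * (cos (ψ * τ) - 1),
           (1 + k ^ 2 * cos (ψ * τ)) / ψ ^ 2] := by
  have h3 : rsweOperator k ^ 3 = (-ψ ^ 2) • rsweOperator k := by
    rw [hψ_sq]; exact rsweOperator_pow_three k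
  refine (NormedSpace.exp_smul_eq_of_pow_three_eq_smul hψ h3 τ).trans ?_
  rw [rsweOperator_sq, rsweOperator, show k ^ 2 = ψ ^ 2 - 1 by rw [hψ_sq]; ring]
  ext i j
  fin_cases i <;> fin_cases j <;> simp <;> field_simp <;> ring

end

/-- The matrix exponential of the one-dimensional RSWE linear operator:
for `L = [[0, −1, ik], [1, 0, 0], [ik, 0, 0]]` and `ψ = √(1 + k²)`,
`e^{τL}` is the stated explicit matrix. -/
theorem rswe_matrix_exponential (k τ : ℝ) (ψ : ℝ) (hψ : ψ = Real.sqrt (1 + k ^ 2))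
    (L : Matrix (Fin 3) (Fin 3) ℂ)
    (hL : L = !![0, -1, I * k; 1, 0, 0; I * k, 0, 0]) :
    NormedSpace.exp ((τ : ℂ) • L) =
      !![(Real.cos (ψ * τ) : ℂ), -(1 / (ψ : ℂ)) * Real.sin (ψ * τ),
           (I * k / ψ) * Real.sin (ψ * τ);
         (1 / (ψ : ℂ)) * Real.sin (ψ * τ), ((k : ℂ) ^ 2 + Real.cos (ψ * τ)) / (ψ : ℂ) ^ 2,
           (I * k / (ψ : ℂ) ^ 2) * (1 - Real.cos (ψ * τ));
         (I * k / ψ) * Real.sin (ψ * τ), (I * k / (ψ : ℂ) ^ 2) * (Real.cos (ψ * τ) - 1),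
           (1 + (k : ℂ) ^ 2 * Real.cos (ψ * τ)) / (ψ : ℂ) ^ 2] := by
  have hψ_pos : 0 < ψ := hψ ▸ Real.sqrt_pos.2 (by positivity)
  have hψ_sq : (ψ : ℂ) ^ 2 = 1 + (k : ℂ) ^ 2 := by
    exact_mod_cast hψ ▸ Real.sq_sqrt (by positivity : (0 : ℝ) ≤ 1 + k ^ 2)
  rw [hL, show !![0, -1, I * k; 1, 0, 0; I * k, 0, 0] = rsweOperator k from rfl,
    exp_smul_rsweOperator (ofReal_ne_zero.2 hψ_pos.ne') hψ_sq]
  push_cast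
  rfl
end

section
/- Let ω_R > 0, λ real, ρ > 0 with ρ ≠ 1, and let t be real and x̃, ỹ, z̃ ∈ ℂ be fixed. Define, for r ∈ ℝ, the vector N(r) ∈ ℂ³ with components N₁(r) = (iλ/ω_R) Re(e^{−iω_R(t+r)} x̃) Re(e^{−iρω_R(t+r)} z̃), N₂(r) = (iλ/ω_R) Re(e^{−iω_R(t+r)} ỹ) Re(e^{−iρω_R(t+r)} z̃), and N₃(r) = (iλ/(2ρω_R)) [Re(e^{−iω_R(t+r)} x̃)² + Re(e^{−iω_R(t+r)} ỹ)²]. Then lim_{T → ∞} (1/T) ∫₀^T N(r) dr = (0, 0, (iλ/(4ρω_R)) (|x̃|² + |ỹ|²)). -/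
/-!
Writing each real part as `Re (e^{iar} w) = (w e^{iar} + w̄ e^{-iar}) / 2` turns every component
of `N` into a trigonometric polynomial in `r`. A term `e^{iar}` with `a ≠ 0` has a bounded
primitive, so its time average vanishes. The frequencies that occur are `±(1 ± ρ) ω_R` and
`±2 ω_R`, all nonzero, so only the constant terms `|w|² / 2` of the squares `Re (e^{iar} w)²`
survive.
-/

open Complex Filter Topology ComplexConjugate

def HasTimeAverage {E : Type*} [NormedAddCommGroup E] [NormedSpace ℝ E] (f : ℝ → E) (m : E) :
    Prop :=
  Tendsto (fun T : ℝ => T⁻¹ • ∫ r in (0:ℝ)..T, f r) atTop (𝓝 m)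

namespace HasTimeAverage

theorem const_mul {f : ℝ → ℂ} {m : ℂ} (c : ℂ) (h : HasTimeAverage f m) :
    HasTimeAverage (fun r => c * f r) (c * m) := by
  unfold HasTimeAverage
  simpa only [intervalIntegral.integral_const_mul, mul_smul_comm] using Tendsto.const_mul c h

variable {E : Type*} [NormedAddCommGroup E] [NormedSpace ℝ E] {f g : ℝ → E} {m n : E}

theorem const [CompleteSpace E] (c : E) : HasTimeAverage (fun _ => c) c := by
  refine tendsto_const_nhds.congr' ?_
  filter_upwards [eventually_ne_atTop 0] with T hT
  rw [intervalIntegral.integral_const, sub_zero, smul_smul, inv_mul_cancel₀ hT, one_smul]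

theorem add (hfm : HasTimeAverage f m) (hgn : HasTimeAverage g n)
    (hf : Continuous f := by fun_prop) (hg : Continuous g := by fun_prop) :
    HasTimeAverage (fun r => f r + g r) (m + n) := by
  unfold HasTimeAverage
  simp only [intervalIntegral.integral_add (hf.intervalIntegrable _ _)
    (hg.intervalIntegrable _ _), smul_add]
  exact Tendsto.add hfm hgn

end HasTimeAverage

theorem hasTimeAverage_pi_iff {ι : Type*} [Fintype ι] {E : Type*} [NormedAddCommGroup E]
    [NormedSpace ℝ E] [CompleteSpace E] {f : ℝ → ι → E} {m : ι → E} (hf : Continuous f) :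
    HasTimeAverage f m ↔ ∀ i, HasTimeAverage (f · i) (m i) := by
  unfold HasTimeAverage
  rw [tendsto_pi_nhds]
  refine forall_congr' fun i => ?_
  have heval : ∀ T : ℝ, (∫ r in (0:ℝ)..T, f r) i = ∫ r in (0:ℝ)..T, f r i := fun T =>
    ((ContinuousLinearMap.proj (R := ℝ) i).intervalIntegral_comp_comm
      (hf.intervalIntegrable 0 T)).symm
  simp only [Pi.smul_apply, heval]

theorem hasTimeAverage_exp_mul_I {a : ℝ} (ha : a ≠ 0) :
    HasTimeAverage (fun r : ℝ => exp (a * r * I)) 0 := by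
  have haI : (a * I : ℂ) ≠ 0 := mul_ne_zero (ofReal_ne_zero.2 ha) I_ne_zero
  have hint : ∀ T : ℝ, ∫ r in (0:ℝ)..T, exp (a * r * I) = (exp (a * T * I) - 1) / (a * I) := by
    intro T
    simpa [mul_comm, mul_left_comm] using integral_exp_mul_complex (a := 0) (b := T) haI
  have hbound : ∀ T : ℝ, ‖(exp (a * T * I) - 1) / (a * I)‖ ≤ 2 / |a| := by
    intro T
    rw [norm_div, norm_mul, norm_I, mul_one, norm_real, Real.norm_eq_abs]
    gcongr
    calc ‖exp (a * T * I) - 1‖ ≤ ‖exp (a * T * I)‖ + ‖(1 : ℂ)‖ := norm_sub_le _ _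
      _ = 2 := by rw [← ofReal_mul, norm_exp_ofReal_mul_I, norm_one]; norm_num
  unfold HasTimeAverage
  simp only [hint]
  refine squeeze_zero_norm' ?_ (by simpa using tendsto_inv_atTop_zero.mul_const (2 / |a|))
  filter_upwards [eventually_gt_atTop 0] with T hT
  rw [norm_smul, norm_inv, Real.norm_of_nonneg hT.le]
  gcongr
  exact hbound T

theorem hasTimeAverage_const_mul_exp_mul_I (c : ℂ) {a : ℝ} (ha : a ≠ 0) :
    HasTimeAverage (fun r : ℝ => c * exp (a * r * I)) 0 := by
  simpa using (hasTimeAverage_exp_mul_I ha).const_mul c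

theorem ofReal_re_exp_mul_I_mul (θ : ℝ) (u : ℂ) :
    ((exp (θ * I) * u).re : ℂ) = (exp (θ * I) * u + exp (-θ * I) * conj u) / 2 := by
  rw [re_eq_add_conj, map_mul, ← exp_conj, map_mul, conj_ofReal, conj_I, mul_neg, neg_mul]

theorem hasTimeAverage_re_mul_re {a b : ℝ} (hadd : a + b ≠ 0) (hsub : a - b ≠ 0) (u v : ℂ) :
    HasTimeAverage
      (fun r : ℝ => ((exp (a * r * I) * u).re : ℂ) * ((exp (b * r * I) * v).re : ℂ)) 0 := by
  have hexpand : ∀ r : ℝ, ((exp (a * r * I) * u).re : ℂ) * ((exp (b * r * I) * v).re : ℂ) =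
      u * v / 4 * exp (↑(a + b) * r * I) + (u * conj v / 4 * exp (↑(a - b) * r * I) +
      (conj u * v / 4 * exp (↑(-(a - b)) * r * I) +
        conj u * conj v / 4 * exp (↑(-(a + b)) * r * I))) := by
    intro r
    rw [← ofReal_mul a r, ← ofReal_mul b r, ofReal_re_exp_mul_I_mul, ofReal_re_exp_mul_I_mul]
    push_cast
    simp only [neg_sub, add_mul, sub_mul, neg_mul, exp_add, exp_sub, exp_neg]
    ring
  simp only [hexpand]
  simpa using (hasTimeAverage_const_mul_exp_mul_I (u * v / 4) hadd).add
    ((hasTimeAverage_const_mul_exp_mul_I (u * conj v / 4) hsub).add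
      ((hasTimeAverage_const_mul_exp_mul_I (conj u * v / 4) (neg_ne_zero.2 hsub)).add
        (hasTimeAverage_const_mul_exp_mul_I (conj u * conj v / 4) (neg_ne_zero.2 hadd))))

theorem hasTimeAverage_re_sq {a : ℝ} (ha : a ≠ 0) (u : ℂ) :
    HasTimeAverage (fun r : ℝ => ((exp (a * r * I) * u).re : ℂ) ^ 2) ((‖u‖ : ℂ) ^ 2 / 2) := by
  have h2a : 2 * a ≠ 0 := mul_ne_zero two_ne_zero ha
  have hexpand : ∀ r : ℝ, ((exp (a * r * I) * u).re : ℂ) ^ 2 =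
      u ^ 2 / 4 * exp (↑(2 * a) * r * I) + (conj u ^ 2 / 4 * exp (↑(-(2 * a)) * r * I) +
        (‖u‖ : ℂ) ^ 2 / 2) := by
    intro r
    rw [← ofReal_mul a r, ofReal_re_exp_mul_I_mul, ← mul_conj']
    push_cast
    simp only [neg_mul, exp_neg, two_mul, add_mul, exp_add]
    field_simp
    ring
  simp only [hexpand]
  simpa using (hasTimeAverage_const_mul_exp_mul_I (u ^ 2 / 4) h2a).add
    ((hasTimeAverage_const_mul_exp_mul_I (conj u ^ 2 / 4) (neg_ne_zero.2 h2a)).add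
      (HasTimeAverage.const ((‖u‖ : ℂ) ^ 2 / 2)))

/-- Classical mean correction of the swinging spring: the classical time-average of
the mapped nonlinearity at a fixed modulation-variable state `(x̃, ỹ, z̃)` is
`(0, 0, (iλ/(4ρω_R))(|x̃|² + |ỹ|²))`. -/
theorem swinging_spring_classical_mean_correction
    (ωR lam ρ : ℝ) (hωR : 0 < ωR) (hρ : 0 < ρ) (hρ1 : ρ ≠ 1)
    (t : ℝ) (xt yt zt : ℂ) (N : ℝ → Fin 3 → ℂ)
    (hN : N = fun r : ℝ =>
      ![(I * lam / ωR) * ((Complex.exp (-I * ωR * (t + r)) * xt).re : ℂ) *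
          ((Complex.exp (-I * ρ * ωR * (t + r)) * zt).re : ℂ),
        (I * lam / ωR) * ((Complex.exp (-I * ωR * (t + r)) * yt).re : ℂ) *
          ((Complex.exp (-I * ρ * ωR * (t + r)) * zt).re : ℂ),
        (I * lam / (2 * ρ * ωR)) *
          ((((Complex.exp (-I * ωR * (t + r)) * xt).re : ℂ)) ^ 2 +
            (((Complex.exp (-I * ωR * (t + r)) * yt).re : ℂ)) ^ 2)]) :
    Tendsto (fun T : ℝ => (T : ℝ)⁻¹ • ∫ r in (0:ℝ)..T, N r)
      atTop (nhds ![0, 0,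
        (I * lam / (4 * ρ * ωR)) * ((‖xt‖ ^ 2 : ℝ) + (‖yt‖ ^ 2 : ℝ))]) := by
  have hx : ∀ (w : ℂ) (r : ℝ),
      exp (-I * ωR * (t + r)) * w = exp (↑(-ωR) * r * I) * (exp (-I * ωR * t) * w) :=
    fun w r => by rw [← mul_assoc, ← exp_add]; push_cast; ring_nf
  have hz : ∀ r : ℝ, exp (-I * ρ * ωR * (t + r)) * zt =
      exp (↑(-(ρ * ωR)) * r * I) * (exp (-I * ρ * ωR * t) * zt) :=
    fun r => by rw [← mul_assoc, ← exp_add]; push_cast; ring_nf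
  have hphase : ∀ w : ℂ, ‖exp (-I * ωR * t) * w‖ = ‖w‖ := fun w => by simp [norm_exp]
  have hsum : -ωR + -(ρ * ωR) ≠ 0 := by nlinarith
  have hdiff : -ωR - -(ρ * ωR) ≠ 0 := by
    rw [show -ωR - -(ρ * ωR) = (ρ - 1) * ωR by ring]
    exact mul_ne_zero (sub_ne_zero.2 hρ1) hωR.ne'
  subst hN
  simp only [hx, hz]
  refine (hasTimeAverage_pi_iff (by fun_prop)).2 fun i => ?_
  fin_cases i <;> dsimp
  · simpa only [mul_assoc, mul_zero] using
      (hasTimeAverage_re_mul_re hsum hdiff _ _).const_mul (I * lam / ωR)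
  · simpa only [mul_assoc, mul_zero] using
      (hasTimeAverage_re_mul_re hsum hdiff _ _).const_mul (I * lam / ωR)
  · convert ((hasTimeAverage_re_sq (neg_ne_zero.2 hωR.ne') _).add
      (hasTimeAverage_re_sq (neg_ne_zero.2 hωR.ne') _)).const_mul (I * lam / (2 * ρ * ωR)) using 1
    simp only [hphase]
    push_cast
    ring
end
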